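/- Let B₂ = {|0⟩, |1⟩} be the standard basis of ℂ², B₀ = {(|0⟩+|1⟩)/√2, (|0⟩−|1⟩)/√2}, B₁ = {(|0⟩+i|1⟩)/√2, (|0⟩−i|1⟩)/√2}, and let P₂ be the two-qubit control-phase, the diagonal unitary on ℂ² ⊗ ℂ² with P₂(|s⟩⊗|t⟩) = (−1)^{st}|s⟩⊗|t⟩. Then the five orthonormal bases of EuclideanSpace ℂ (Fin 2 × Fin 2) given by {B₂ ⊗ B₂}, {B₀ ⊗ B₀}, {B₁ ⊗ B₁}, {P₂(u ⊗ v) : u ∈ B₀, v ∈ B₁}, and {P₂(u ⊗ v) : u ∈ B₁, v ∈ B₀} are pairwise mutually unbiased, i.e. form a complete set of 5 MUBs in dimension 4. -/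

import Mathlib

/-- The standard qubit basis `B₂`. -/
noncomputable def qbStd (j : Fin 2) : EuclideanSpace ℂ (Fin 2) :=
  EuclideanSpace.single j 1

/-- The qubit basis `B₀ = {(|0⟩+|1⟩)/√2, (|0⟩−|1⟩)/√2}`. -/
noncomputable def qbX (j : Fin 2) : EuclideanSpace ℂ (Fin 2) :=
  WithLp.toLp 2 (fun s => (Real.sqrt 2 : ℂ)⁻¹ * (-1 : ℂ) ^ ((j : ℕ) * (s : ℕ)))

/-- The qubit basis `B₁ = {(|0⟩+i|1⟩)/√2, (|0⟩−i|1⟩)/√2}`. -/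
noncomputable def qbY (j : Fin 2) : EuclideanSpace ℂ (Fin 2) :=
  WithLp.toLp 2 (fun s => (Real.sqrt 2 : ℂ)⁻¹ * Complex.I ^ (s : ℕ) * (-1 : ℂ) ^ ((j : ℕ) * (s : ℕ)))

/-- The product vector `(u ⊗ v)(a,b) = u(a)·v(b)`. -/
noncomputable def tens (u v : EuclideanSpace ℂ (Fin 2)) :
    EuclideanSpace ℂ (Fin 2 × Fin 2) :=
  WithLp.toLp 2 (fun ab => u ab.1 * v ab.2)

/-- The two-qubit control-phase, `P₂(|s⟩⊗|t⟩) = (−1)^{st}|s⟩⊗|t⟩` (a diagonal unitary). -/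
noncomputable def cphase2 (ψ : EuclideanSpace ℂ (Fin 2 × Fin 2)) :
    EuclideanSpace ℂ (Fin 2 × Fin 2) :=
  WithLp.toLp 2 (fun st => (-1 : ℂ) ^ ((st.1 : ℕ) * (st.2 : ℕ)) * ψ st)

/-- The five candidate bases `B₂⊗B₂`, `B₀⊗B₀`, `B₁⊗B₁`, `P₂(B₀⊗B₁)`, `P₂(B₁⊗B₀)`. -/
noncomputable def mub4 : Fin 5 → (Fin 2 × Fin 2) → EuclideanSpace ℂ (Fin 2 × Fin 2) :=
  ![fun ij => tens (qbStd ij.1) (qbStd ij.2),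
    fun ij => tens (qbX ij.1) (qbX ij.2),
    fun ij => tens (qbY ij.1) (qbY ij.2),
    fun ij => cphase2 (tens (qbX ij.1) (qbY ij.2)),
    fun ij => cphase2 (tens (qbY ij.1) (qbX ij.2))]

/-! Inner products of product vectors factor and the control-phase `P₂` is a diagonal unitary,
so orthonormality, and unbiasedness among `B₂ ⊗ B₂`, `B₀ ⊗ B₀`, `B₁ ⊗ B₁` and between the two
`P₂`-bases, reduce to the qubit bases `B₂`, `B₀`, `B₁` being pairwise unbiased.
Against `B₂ ⊗ B₂` an inner product is a coordinate, which `P₂` only changes by a sign.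
In the remaining pairs, expanding in one qubit gives
`⟪a ⊗ b, P₂ (u ⊗ v)⟫ = ā₀ u₀ ⟪b, v⟫ + ā₁ u₁ ⟪b, Z v⟫` with `Z = diag(1, -1)`; since `Z` swaps
the two vectors of `B₀` and of `B₁`, exactly one term survives when `b` and `v` come from the
same qubit basis, and it has squared modulus `1/2 · 1/2`. -/

open scoped ComplexConjugate InnerProductSpace

section Unbiased

variable {E ι κ : Type*} [NormedAddCommGroup E] [InnerProductSpace ℂ E]

def Unbiased (e : ι → E) (f : κ → E) (c : ℝ) : Prop :=
  ∀ i j, ‖⟪e i, f j⟫_ℂ‖ ^ 2 = c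

lemma Unbiased.symm {e : ι → E} {f : κ → E} {c : ℝ} (h : Unbiased e f c) : Unbiased f e c :=
  fun i j => by rw [norm_inner_symm]; exact h j i

end Unbiased

lemma inner_qubit (u v : EuclideanSpace ℂ (Fin 2)) :
    ⟪u, v⟫_ℂ = conj (u 0) * v 0 + conj (u 1) * v 1 := by
  simp [PiLp.inner_apply, Fin.sum_univ_two, mul_comm]

lemma ofReal_sqrt_two_sq : ((Real.sqrt 2 : ℝ) : ℂ) ^ 2 = 2 := by
  rw [← Complex.ofReal_pow, Real.sq_sqrt zero_le_two]; norm_num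

lemma sqrt_two_pow_four : Real.sqrt 2 ^ 4 = 4 := by
  rw [show 4 = 2 * 2 from rfl, pow_mul, Real.sq_sqrt zero_le_two]; norm_num

lemma norm_sq_qbX_apply (j s : Fin 2) : ‖qbX j s‖ ^ 2 = 1 / 2 := by
  simp [qbX]

lemma norm_sq_qbY_apply (j s : Fin 2) : ‖qbY j s‖ ^ 2 = 1 / 2 := by
  simp [qbY]

lemma orthonormal_qbStd : Orthonormal ℂ qbStd := EuclideanSpace.orthonormal_single

lemma orthonormal_qbX : Orthonormal ℂ qbX := by
  rw [orthonormal_iff_ite]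
  intro j k
  rw [inner_qubit]
  fin_cases j <;> fin_cases k <;> simp [qbX, ← Complex.ofReal_inv] <;> ring_nf <;>
    simp [ofReal_sqrt_two_sq]

lemma orthonormal_qbY : Orthonormal ℂ qbY := by
  rw [orthonormal_iff_ite]
  intro j k
  rw [inner_qubit]
  fin_cases j <;> fin_cases k <;> simp [qbY, ← Complex.ofReal_inv] <;> ring_nf <;>
    simp [ofReal_sqrt_two_sq] <;> norm_num

lemma unbiased_qbStd_qbX : Unbiased qbStd qbX (1 / 2) := fun j k => by
  simp [qbStd, EuclideanSpace.inner_single_left, norm_sq_qbX_apply]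

lemma unbiased_qbStd_qbY : Unbiased qbStd qbY (1 / 2) := fun j k => by
  simp [qbStd, EuclideanSpace.inner_single_left, norm_sq_qbY_apply]

lemma unbiased_qbX_qbY : Unbiased qbX qbY (1 / 2) := fun j k => by
  rw [Complex.sq_norm, inner_qubit]
  fin_cases j <;> fin_cases k <;> simp [qbX, qbY, ← Complex.ofReal_inv, Complex.normSq_apply] <;>
    ring_nf <;> norm_num [sqrt_two_pow_four]

def pauliZ (v : EuclideanSpace ℂ (Fin 2)) : EuclideanSpace ℂ (Fin 2) :=
  WithLp.toLp 2 (fun s => (-1 : ℂ) ^ (s : ℕ) * v s)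

lemma pauliZ_qbX (l : Fin 2) : pauliZ (qbX l) = qbX (l + 1) := by
  ext s; fin_cases l <;> fin_cases s <;> simp [pauliZ, qbX]

lemma pauliZ_qbY (l : Fin 2) : pauliZ (qbY l) = qbY (l + 1) := by
  ext s; fin_cases l <;> fin_cases s <;> simp [pauliZ, qbY]

lemma inner_tens (a b u v : EuclideanSpace ℂ (Fin 2)) :
    ⟪tens a b, tens u v⟫_ℂ = ⟪a, u⟫_ℂ * ⟪b, v⟫_ℂ := by
  simp only [tens, PiLp.inner_apply, Fintype.sum_prod_type, Finset.sum_mul_sum,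
    RCLike.inner_apply', map_mul]
  exact Fintype.sum_congr _ _ fun x => Fintype.sum_congr _ _ fun y => by ring

lemma Orthonormal.tens {e f : Fin 2 → EuclideanSpace ℂ (Fin 2)} (he : Orthonormal ℂ e)
    (hf : Orthonormal ℂ f) :
    Orthonormal ℂ (fun ij : Fin 2 × Fin 2 => tens (e ij.1) (f ij.2)) := by
  rw [orthonormal_iff_ite] at *
  rintro ⟨i, j⟩ ⟨k, l⟩
  rw [inner_tens, he, hf]
  by_cases i = k <;> by_cases j = l <;> simp [*]

lemma Unbiased.tens {e e' f f' : Fin 2 → EuclideanSpace ℂ (Fin 2)} {c c' : ℝ}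
    (he : Unbiased e e' c) (hf : Unbiased f f' c') :
    Unbiased (fun ij : Fin 2 × Fin 2 => tens (e ij.1) (f ij.2))
      (fun kl : Fin 2 × Fin 2 => tens (e' kl.1) (f' kl.2)) (c * c') := by
  rintro ⟨i, j⟩ ⟨k, l⟩
  rw [inner_tens, norm_mul, mul_pow, he, hf]

lemma inner_cphase2 (x y : EuclideanSpace ℂ (Fin 2 × Fin 2)) :
    ⟪cphase2 x, cphase2 y⟫_ℂ = ⟪x, y⟫_ℂ := by
  simp only [cphase2, PiLp.inner_apply, RCLike.inner_apply', map_mul, map_pow, map_neg, map_one]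
  refine Finset.sum_congr rfl fun st _ => ?_
  rw [mul_mul_mul_comm, ← mul_pow, neg_one_mul, neg_neg, one_pow, one_mul]

lemma Orthonormal.cphase2 {ι : Type*} {e : ι → EuclideanSpace ℂ (Fin 2 × Fin 2)}
    (he : Orthonormal ℂ e) : Orthonormal ℂ (cphase2 ∘ e) := by
  classical
  rw [orthonormal_iff_ite] at *
  simpa [inner_cphase2] using he

lemma Unbiased.cphase2 {ι κ : Type*} {e : ι → EuclideanSpace ℂ (Fin 2 × Fin 2)}
    {f : κ → EuclideanSpace ℂ (Fin 2 × Fin 2)} {c : ℝ} (h : Unbiased e f c) :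
    Unbiased (cphase2 ∘ e) (cphase2 ∘ f) c := fun i j => by
  simpa only [Function.comp_apply, inner_cphase2] using h i j

lemma tens_qbStd (s t : Fin 2) : tens (qbStd s) (qbStd t) = EuclideanSpace.single (s, t) 1 := by
  ext ⟨a, b⟩
  by_cases a = s <;> by_cases b = t <;> simp [tens, qbStd, *]

lemma norm_cphase2_apply (ψ : EuclideanSpace ℂ (Fin 2 × Fin 2)) (st : Fin 2 × Fin 2) :
    ‖cphase2 ψ st‖ = ‖ψ st‖ := by
  simp [cphase2]

lemma unbiased_qbStd_cphase2_tens {u v : Fin 2 → EuclideanSpace ℂ (Fin 2)}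
    (hu : ∀ k s, ‖u k s‖ ^ 2 = 1 / 2) (hv : ∀ l t, ‖v l t‖ ^ 2 = 1 / 2) :
    Unbiased (fun ij : Fin 2 × Fin 2 => tens (qbStd ij.1) (qbStd ij.2))
      (fun kl : Fin 2 × Fin 2 => cphase2 (tens (u kl.1) (v kl.2))) (1 / 4) := by
  rintro ⟨i, j⟩ ⟨k, l⟩
  dsimp only
  rw [tens_qbStd, EuclideanSpace.inner_single_left, map_one, one_mul, norm_cphase2_apply]
  simp only [tens, PiLp.toLp_apply, norm_mul, mul_pow, hu, hv]
  norm_num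

lemma inner_tens_cphase2_tens (a b u v : EuclideanSpace ℂ (Fin 2)) :
    ⟪tens a b, cphase2 (tens u v)⟫_ℂ =
      conj (a 0) * u 0 * ⟪b, v⟫_ℂ + conj (a 1) * u 1 * ⟪b, pauliZ v⟫_ℂ := by
  simp only [tens, cphase2, pauliZ, PiLp.inner_apply, RCLike.inner_apply, map_mul,
    Fintype.sum_prod_type, Fin.sum_univ_two, Fin.val_zero, Fin.val_one, mul_zero, mul_one,
    pow_zero, pow_one]
  ring

lemma inner_tens_cphase2_tens_comm (a b u v : EuclideanSpace ℂ (Fin 2)) :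
    ⟪tens a b, cphase2 (tens u v)⟫_ℂ = ⟪tens b a, cphase2 (tens v u)⟫_ℂ := by
  simp only [tens, cphase2, PiLp.inner_apply, RCLike.inner_apply, map_mul,
    Fintype.sum_prod_type, Fin.sum_univ_two]
  ring

lemma unbiased_tens_cphase2_tens_of_same_right {a u b : Fin 2 → EuclideanSpace ℂ (Fin 2)}
    (hb : Orthonormal ℂ b) (hZ : ∀ l, pauliZ (b l) = b (l + 1))
    (ha : ∀ i s, ‖a i s‖ ^ 2 = 1 / 2) (hu : ∀ k s, ‖u k s‖ ^ 2 = 1 / 2) :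
    Unbiased (fun ij : Fin 2 × Fin 2 => tens (a ij.1) (b ij.2))
      (fun kl : Fin 2 × Fin 2 => cphase2 (tens (u kl.1) (b kl.2))) (1 / 4) := by
  rintro ⟨i, j⟩ ⟨k, l⟩
  rw [inner_tens_cphase2_tens, hZ, orthonormal_iff_ite.mp hb, orthonormal_iff_ite.mp hb]
  fin_cases j <;> fin_cases l <;> simp [mul_pow, ha, hu] <;> norm_num

lemma unbiased_tens_cphase2_tens_of_same_left {a u b : Fin 2 → EuclideanSpace ℂ (Fin 2)}
    (hb : Orthonormal ℂ b) (hZ : ∀ l, pauliZ (b l) = b (l + 1))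
    (ha : ∀ i s, ‖a i s‖ ^ 2 = 1 / 2) (hu : ∀ k s, ‖u k s‖ ^ 2 = 1 / 2) :
    Unbiased (fun ij : Fin 2 × Fin 2 => tens (b ij.1) (a ij.2))
      (fun kl : Fin 2 × Fin 2 => cphase2 (tens (b kl.1) (u kl.2))) (1 / 4) := by
  rintro ⟨i, j⟩ ⟨k, l⟩
  rw [inner_tens_cphase2_tens_comm]
  exact unbiased_tens_cphase2_tens_of_same_right hb hZ ha hu (j, i) (l, k)

lemma orthonormal_mub4 (m : Fin 5) : Orthonormal ℂ (mub4 m) := by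
  fin_cases m
  exacts [orthonormal_qbStd.tens orthonormal_qbStd, orthonormal_qbX.tens orthonormal_qbX,
    orthonormal_qbY.tens orthonormal_qbY, (orthonormal_qbX.tens orthonormal_qbY).cphase2,
    (orthonormal_qbY.tens orthonormal_qbX).cphase2]

lemma unbiased_mub4_of_lt {m n : Fin 5} (hmn : m < n) : Unbiased (mub4 m) (mub4 n) (1 / 4) := by
  have quarter : (1 / 2 : ℝ) * (1 / 2) = 1 / 4 := by norm_num
  fin_cases m <;> fin_cases n <;> try exact absurd hmn (by decide)
  · exact quarter ▸ unbiased_qbStd_qbX.tens unbiased_qbStd_qbX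
  · exact quarter ▸ unbiased_qbStd_qbY.tens unbiased_qbStd_qbY
  · exact unbiased_qbStd_cphase2_tens norm_sq_qbX_apply norm_sq_qbY_apply
  · exact unbiased_qbStd_cphase2_tens norm_sq_qbY_apply norm_sq_qbX_apply
  · exact quarter ▸ unbiased_qbX_qbY.tens unbiased_qbX_qbY
  · exact unbiased_tens_cphase2_tens_of_same_left orthonormal_qbX pauliZ_qbX
      norm_sq_qbX_apply norm_sq_qbY_apply
  · exact unbiased_tens_cphase2_tens_of_same_right orthonormal_qbX pauliZ_qbX
      norm_sq_qbX_apply norm_sq_qbY_apply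
  · exact unbiased_tens_cphase2_tens_of_same_right orthonormal_qbY pauliZ_qbY
      norm_sq_qbY_apply norm_sq_qbX_apply
  · exact unbiased_tens_cphase2_tens_of_same_left orthonormal_qbY pauliZ_qbY
      norm_sq_qbY_apply norm_sq_qbX_apply
  · exact (quarter ▸ unbiased_qbX_qbY.tens unbiased_qbX_qbY.symm).cphase2

/-- The five bases `{B₂⊗B₂}`, `{B₀⊗B₀}`, `{B₁⊗B₁}`, `{P₂(u⊗v) : u ∈ B₀, v ∈ B₁}` and
`{P₂(u⊗v) : u ∈ B₁, v ∈ B₀}` are orthonormal bases of `ℂ² ⊗ ℂ²` and are pairwise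
mutually unbiased: a complete set of `5` MUBs in dimension `4`. -/
theorem mub4_complete :
    (∀ m : Fin 5, Orthonormal ℂ (mub4 m)) ∧
    (∀ m n : Fin 5, m ≠ n → ∀ v w : Fin 2 × Fin 2,
      ‖(inner ℂ (mub4 m v) (mub4 n w) : ℂ)‖ ^ 2 = 1 / 4) := by
  refine ⟨orthonormal_mub4, fun m n hmn => ?_⟩
  rcases hmn.lt_or_gt with hlt | hgt
  exacts [unbiased_mub4_of_lt hlt, (unbiased_mub4_of_lt hgt).symm]
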